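/- For all positive integers ℓ and n, ∑_{r=ℓ−1}^{n−1} (−1)^{ℓ+r+1} · (2ℓ²) / ((r+ℓ+1)! (r−ℓ+1)!) · p(n, r) = δ_{ℓ,n}, where δ_{ℓ,n} equals 1 if ℓ = n and 0 otherwise. (The sum may be taken over all r ≥ ℓ−1 since p(n,r) = 0 for r ≥ n.) -/

import Mathlib

open scoped BigOperators

namespace PaperStmt

/-- `p(x, r) := ∏_{i=1}^r (x² - i²)`. -/
def p (x : ℚ) (r : ℕ) : ℚ := ∏ i ∈ Finset.Icc 1 r, (x ^ 2 - (i : ℚ) ^ 2)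

/-! Write `n = ℓ + m` and `r = ℓ - 1 + k`. Since `p(n, r) = (n + r)! / (n (n - 1 - r)!)`, the sum
equals `2ℓ² / (n m!) · ∑_{k ≤ m} (-1)^k C(m, k) (2ℓ - 1 + k + m)! / (2ℓ + k)!`. For `m ≥ 1` the
quotient of factorials is a polynomial of degree `m - 1` in `k`, so this alternating binomial sum,
an `m`-th forward difference, vanishes; for `m = 0` the single term is `1`, and for `n < ℓ` the
sum is empty. -/

open scoped Nat
open Finset Polynomial

theorem sum_range_neg_one_pow_mul_choose_mul_eval_eq_zero {R : Type*} [CommRing R] {P : R[X]}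
    {m : ℕ} (hP : P.natDegree < m) :
    ∑ k ∈ range (m + 1), (-1 : R) ^ k * m.choose k * P.eval (k : R) = 0 := by
  have h := congr_fun (fwdDiff_iter_eq_zero_of_degree_lt hP) 0
  rw [fwdDiff_iter_eq_sum_shift, Pi.zero_apply] at h
  rw [← mul_zero ((-1 : R) ^ m), ← h, mul_sum]
  refine sum_congr rfl fun k hk => ?_
  obtain ⟨j, rfl⟩ := Nat.exists_eq_add_of_le (Nat.lt_succ_iff.mp (mem_range.mp hk))
  simp only [Nat.add_sub_cancel_left, zsmul_eq_mul, nsmul_eq_mul, mul_one, zero_add]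
  push_cast
  have hj : (-1 : R) ^ j * (-1) ^ j = 1 := by rw [← pow_add, ← two_mul, pow_mul]; simp
  linear_combination (-(-1 : R) ^ k * (k + j).choose k * P.eval (k : R)) * hj

theorem factorial_add_div_factorial_eq_eval_ascPochhammer (a m : ℕ) :
    ((a + m)! / a ! : ℚ) = (ascPochhammer ℚ m).eval ((a : ℚ) + 1) := by
  rw [← Nat.factorial_mul_ascFactorial, ← Nat.cast_add_one,
    ascPochhammer_nat_eq_natCast_ascFactorial]
  push_cast
  field_simp

theorem sum_range_neg_one_pow_mul_choose_mul_factorial_div_eq_zero (a m : ℕ) :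
    ∑ k ∈ range (m + 2), (-1 : ℚ) ^ k * (m + 1).choose k * ((a + k + m)! / (a + k)! : ℚ) = 0 := by
  have hdeg : ((ascPochhammer ℚ m).comp (X + C ((a : ℚ) + 1))).natDegree < m + 1 := by
    rw [natDegree_comp, ascPochhammer_natDegree, natDegree_X_add_C, mul_one]
    exact Nat.lt_succ_self m
  rw [← sum_range_neg_one_pow_mul_choose_mul_eval_eq_zero hdeg]
  refine sum_congr rfl fun k _ => ?_
  rw [factorial_add_div_factorial_eq_eval_ascPochhammer, eval_comp]
  simp only [eval_add, eval_X, eval_C]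
  push_cast
  rw [add_right_comm (a : ℚ), add_comm ((a : ℚ) + 1)]

theorem p_mul_factorial {n r : ℕ} (h : r < n) : p n r * (n * (n - 1 - r)! : ℚ) = (n + r)! := by
  induction r with
  | zero =>
    simp only [p, zero_lt_one, Icc_eq_empty_of_lt, prod_empty, one_mul, Nat.sub_zero, add_zero]
    exact_mod_cast Nat.mul_factorial_pred (by omega)
  | succ r ih =>
    obtain ⟨d, rfl⟩ : ∃ d, n = r + 2 + d := ⟨n - (r + 2), by omega⟩
    have ih := ih (by omega)
    rw [show r + 2 + d - 1 - r = d + 1 by omega, Nat.factorial_succ] at ih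
    rw [show r + 2 + d - 1 - (r + 1) = d by omega, p, prod_Icc_succ_top (by omega), ← p,
      show r + 2 + d + (r + 1) = (r + 2 + d + r) + 1 by omega, Nat.factorial_succ]
    push_cast at ih ⊢
    linear_combination (2 * r + 3 + d : ℚ) * ih

def deltaSummand (ℓ n r : ℕ) : ℚ :=
  (-1 : ℚ) ^ (ℓ + r + 1) * (2 * (ℓ : ℚ) ^ 2)
    / ((Nat.factorial (r + ℓ + 1) : ℚ) * (Nat.factorial (r + 1 - ℓ) : ℚ)) * p n r

theorem deltaSummand_eq {ℓ m k : ℕ} (hℓ : 1 ≤ ℓ) (hk : k ≤ m) :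
    deltaSummand ℓ (ℓ + m) (ℓ - 1 + k) = 2 * ℓ ^ 2 / ((ℓ + m) * m !) *
      ((-1) ^ k * m.choose k * ((2 * ℓ - 1 + k + m)! / (2 * ℓ + k)! : ℚ)) := by
  have hp := p_mul_factorial (n := ℓ + m) (r := ℓ - 1 + k) (by omega)
  rw [show ℓ + m - 1 - (ℓ - 1 + k) = m - k by omega,
    show ℓ + m + (ℓ - 1 + k) = 2 * ℓ - 1 + k + m by omega] at hp
  have hsign : (-1 : ℚ) ^ (ℓ + (ℓ - 1 + k) + 1) = (-1) ^ k := by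
    rw [show ℓ + (ℓ - 1 + k) + 1 = 2 * ℓ + k by omega, pow_add, pow_mul]; norm_num
  rw [deltaSummand, hsign, show ℓ - 1 + k + ℓ + 1 = 2 * ℓ + k by omega,
    show ℓ - 1 + k + 1 - ℓ = k by omega, Nat.cast_choose ℚ hk]
  push_cast at hp ⊢
  field_simp
  linear_combination hp

theorem sum_deltaSummand_eq {ℓ m : ℕ} (hℓ : 1 ≤ ℓ) :
    ∑ r ∈ Icc (ℓ - 1) (ℓ + m - 1), deltaSummand ℓ (ℓ + m) r = 2 * ℓ ^ 2 / ((ℓ + m) * m !) *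
      ∑ k ∈ range (m + 1), (-1) ^ k * m.choose k * ((2 * ℓ - 1 + k + m)! / (2 * ℓ + k)! : ℚ) := by
  rw [← Ico_add_one_right_eq_Icc, show ℓ + m - 1 + 1 = ℓ + m by omega, sum_Ico_eq_sum_range,
    show ℓ + m - (ℓ - 1) = m + 1 by omega, mul_sum]
  exact sum_congr rfl fun k hk => deltaSummand_eq hℓ (Nat.lt_succ_iff.mp (mem_range.mp hk))

/-- Representation of the Kronecker delta:
`δ_{ℓ,n} = ∑_{r=ℓ-1}^{n-1} (-1)^{ℓ+r+1} 2ℓ² / ((r+ℓ+1)! (r-ℓ+1)!) p(n, r)` for `ℓ, n ≥ 1`. -/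
theorem stmt6 (ℓ n : ℕ) (hℓ : 1 ≤ ℓ) (hn : 1 ≤ n) :
    ∑ r ∈ Finset.Icc (ℓ - 1) (n - 1),
        (-1 : ℚ) ^ (ℓ + r + 1) * (2 * (ℓ : ℚ) ^ 2)
            / ((Nat.factorial (r + ℓ + 1) : ℚ) * (Nat.factorial (r + 1 - ℓ) : ℚ)) * p n r
      = if ℓ = n then 1 else 0 := by
  obtain hnℓ | hℓn := lt_or_ge n ℓ
  · rw [Icc_eq_empty (by omega), sum_empty, if_neg (by omega)]
  obtain ⟨m, rfl⟩ := Nat.exists_eq_add_of_le hℓn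
  change ∑ r ∈ Icc (ℓ - 1) (ℓ + m - 1), deltaSummand ℓ (ℓ + m) r = _
  rw [sum_deltaSummand_eq hℓ]
  cases m with
  | zero =>
    have hfac : ((2 * ℓ)! : ℚ) = 2 * ℓ * (2 * ℓ - 1)! := by
      exact_mod_cast (Nat.mul_factorial_pred (by omega)).symm
    rw [if_pos (add_zero ℓ).symm, zero_add, sum_range_one]
    simp only [pow_zero, Nat.choose_self, add_zero, hfac]
    field_simp
    simp
  | succ m =>
    have hfac : ∀ k, 2 * ℓ - 1 + k + (m + 1) = 2 * ℓ + k + m := fun k => by omega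
    rw [if_neg (by omega)]
    simp only [hfac, sum_range_neg_one_pow_mul_choose_mul_factorial_div_eq_zero, mul_zero]

end PaperStmt
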